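/- Let A and B be associative k-algebras and let (▷, ◁, θ) be a non-abelian 2-cocycle on A with values in B. Then the multiplication on A⊕B defined by (a,x)⊠(b,y) = (a·_A b, x·_B y + a▷y + x◁b + θ(a,b)) is associative. -/
import Mathlib


variable {k A B : Type*} [Field k] [AddCommGroup A] [Module k A] [AddCommGroup B] [Module k B]

/-- The multiplication `(a,x) ⊠ (b,y) = (a·_A b, x·_B y + a▷y + x◁b + θ(a,b))` on `A ⊕ B`
associated to a non-abelian 2-cocycle `(▷ = tr, ◁ = tl, θ)`. -/
def nabMul (μ : A →ₗ[k] A →ₗ[k] A) (ν : B →ₗ[k] B →ₗ[k] B)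
    (tr : A →ₗ[k] B →ₗ[k] B) (tl : B →ₗ[k] A →ₗ[k] B)
    (θ : A →ₗ[k] A →ₗ[k] B) (p q : A × B) : A × B :=
  (μ p.1 q.1, ν p.2 q.2 + tr p.1 q.2 + tl p.2 q.1 + θ p.1 q.1)

/-- if `A`, `B` are associative algebras and `(▷, ◁, θ)` is a
non-abelian 2-cocycle on `A` with values in `B`, then `⊠` is associative. -/
theorem nabMul_assoc
    (μ : A →ₗ[k] A →ₗ[k] A) (ν : B →ₗ[k] B →ₗ[k] B)
    (hμ : ∀ a b c : A, μ (μ a b) c = μ a (μ b c))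
    (hν : ∀ x y z : B, ν (ν x y) z = ν x (ν y z))
    (tr : A →ₗ[k] B →ₗ[k] B) (tl : B →ₗ[k] A →ₗ[k] B) (θ : A →ₗ[k] A →ₗ[k] B)
    (hc1 : ∀ (a b : A) (x : B), tr (μ a b) x + ν (θ a b) x = tr a (tr b x))
    (hc2 : ∀ (a : A) (x : B) (b : A), tl (tr a x) b = tr a (tl x b))
    (hc3 : ∀ (x : B) (a b : A), tl (tl x a) b = tl x (μ a b) + ν x (θ a b))
    (hc4 : ∀ (a : A) (x y : B), ν (tr a x) y = tr a (ν x y))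
    (hc5 : ∀ (x : B) (a : A) (y : B), ν (tl x a) y = ν x (tr a y))
    (hc6 : ∀ (x y : B) (a : A), tl (ν x y) a = ν x (tl y a))
    (hc7 : ∀ a b c : A, tl (θ a b) c + θ (μ a b) c = tr a (θ b c) + θ a (μ b c)) :
    ∀ p q s : A × B,
      nabMul μ ν tr tl θ (nabMul μ ν tr tl θ p q) s =
        nabMul μ ν tr tl θ p (nabMul μ ν tr tl θ q s) := by
  rintro ⟨a, x⟩ ⟨b, y⟩ ⟨c, z⟩
  simp only [nabMul, map_add, LinearMap.add_apply, Prod.mk.injEq]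
  refine ⟨hμ a b c, ?_⟩
  rw [hν, hc4, hc5, hc6, hc2, hc3, ← hc1]
  have h7 := hc7 a b c
  rw [← sub_eq_zero] at h7 ⊢
  rw [← h7]
  abel
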